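/- arXiv:1205.6603 — 2 statements merged into one kernel-verified Lean document; each statement's English description precedes it below -/
import Mathlib

section
/- For every β > 0 one has the upper bound K₀(β) ≤ e^{−β} · (√(2π)/(2√β)) · (1 − 1/(8β) + 9/(128β²)). -/
open MeasureTheory Real
open scoped InnerProductSpace

noncomputable section

/-- Momentum space `ℝ³`. -/
abbrev E3 := EuclideanSpace ℝ (Fin 3)

/-- `q⁰ = √(1+|q|²)`. -/
def q0 (q : E3) : ℝ := Real.sqrt (1 + ‖q‖ ^ 2)

/-- Modified Bessel function `K_j(β) = ∫₀^∞ cosh(j r) exp(−β cosh r) dr`. -/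
def Kb (j : ℕ) (β : ℝ) : ℝ :=
  ∫ r in Set.Ioi (0 : ℝ), Real.cosh (j * r) * Real.exp (-β * Real.cosh r)

end

/-!
The substitution `t = sinh (r / 2)`, under which `cosh r = 1 + 2 t²` and
`dr = 2 dt / √(1 + t²)`, gives `K₀(β) = e^{-β} ∫₀^∞ 2 e^{-2βt²} / √(1 + t²) dt`. Bounding
`1 / √(1 + x)` from above by its second-order Taylor polynomial leaves the Gaussian moments
`∫₀^∞ t^{2k} e^{-bt²} dt = Γ(k + 1/2) / (2 bᵏ √b)` for `k ≤ 2` and `b = 2β`.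
-/

open Set

theorem integral_comp_cosh_Ioi {F : Type*} [NormedAddCommGroup F] [NormedSpace ℝ F]
    (g : ℝ → F) :
    ∫ r in Ioi 0, g (cosh r) = ∫ t in Ioi 0, (2 / √(1 + t ^ 2)) • g (1 + 2 * t ^ 2) := by
  set φ : ℝ → ℝ := fun t => 2 * arsinh t
  have hφ' : ∀ t ∈ Ioi (0 : ℝ), HasDerivWithinAt φ (2 * (√(1 + t ^ 2))⁻¹) (Ioi 0) t :=
    fun t _ => ((hasDerivAt_arsinh t).const_mul 2).hasDerivWithinAt
  have hφ_inj : φ.Injective := (mul_right_injective₀ two_ne_zero).comp arsinh_injective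
  have hφ_image : φ '' Ioi 0 = Ioi 0 := by
    ext r
    refine ⟨?_, fun hr => ⟨sinh (r / 2), sinh_pos_iff.2 (half_pos hr), ?_⟩⟩
    · rintro ⟨t, ht, rfl⟩
      exact mul_pos two_pos (arsinh_pos_iff.2 ht)
    · simp only [φ, arsinh_sinh]
      ring
  have hsubst := integral_image_eq_integral_abs_deriv_smul measurableSet_Ioi hφ' hφ_inj.injOn
    (fun r => g (cosh r))
  rw [hφ_image] at hsubst
  rw [hsubst]
  refine setIntegral_congr_fun measurableSet_Ioi fun t _ => ?_
  rw [abs_of_pos (by positivity), ← div_eq_mul_inv]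
  simp only [φ, cosh_two_mul, cosh_sq', sinh_arsinh]
  ring_nf

theorem integrable_pow_mul_exp_neg_mul_sq {b : ℝ} (hb : 0 < b) (n : ℕ) :
    Integrable fun x : ℝ => x ^ n * exp (-b * x ^ 2) := by
  simpa using
    integrable_rpow_mul_exp_neg_mul_sq hb (s := n) (by linarith [n.cast_nonneg (α := ℝ)])

theorem integral_pow_two_mul_mul_exp_neg_mul_sq_Ioi {b : ℝ} (hb : 0 < b) (k : ℕ) :
    ∫ x in Ioi 0, x ^ (2 * k) * exp (-b * x ^ 2) = Gamma (k + 1 / 2) / (2 * b ^ k * √b) := by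
  have h := integral_rpow_mul_exp_neg_mul_rpow two_pos
    (by linarith [k.cast_nonneg (α := ℝ)] : (-1 : ℝ) < 2 * k) hb
  simp only [← rpow_natCast, Nat.cast_mul, Nat.cast_ofNat]
  rw [h, neg_div, show (2 * k + 1 : ℝ) / 2 = k + 1 / 2 by ring, rpow_neg hb.le, rpow_add hb,
    sqrt_eq_rpow]
  field_simp

/-- The second-order Taylor polynomial of `(1 + x) ^ (-1 / 2)` at `0`. -/
noncomputable def invSqrtTaylor (x : ℝ) : ℝ := 1 - x / 2 + 3 * x ^ 2 / 8

theorem inv_sqrt_one_add_le_invSqrtTaylor {x : ℝ} (hx : 0 ≤ x) :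
    (√(1 + x))⁻¹ ≤ invSqrtTaylor x := by
  unfold invSqrtTaylor
  have hs : 0 < √(1 + x) := sqrt_pos.2 (by linarith)
  have hp : 0 < 1 - x / 2 + 3 * x ^ 2 / 8 := by nlinarith [sq_nonneg (x - 1)]
  -- `64 ((1 - x/2 + 3x²/8)² (1 + x) - 1) = x³ (40 - 15x + 9x²)`
  have hx3 : 0 ≤ x ^ 3 * (40 - 15 * x + 9 * x ^ 2) :=
    mul_nonneg (pow_nonneg hx 3) (by nlinarith [sq_nonneg (x - 1)])
  rw [inv_le_iff_one_le_mul₀ hs]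
  calc 1 ≤ √((1 - x / 2 + 3 * x ^ 2 / 8) ^ 2 * (1 + x)) := one_le_sqrt.2 (by nlinarith)
    _ = _ := by rw [sqrt_mul (sq_nonneg _), sqrt_sq hp.le]

theorem integrableOn_and_integral_invSqrtTaylor_sq_mul_exp_neg_mul_sq_Ioi {b : ℝ} (hb : 0 < b) :
    IntegrableOn (fun t => invSqrtTaylor (t ^ 2) * exp (-b * t ^ 2)) (Ioi 0) ∧
    ∫ t in Ioi 0, invSqrtTaylor (t ^ 2) * exp (-b * t ^ 2) =
      √π / (2 * √b) * (1 - 1 / (4 * b) + 9 / (32 * b ^ 2)) := by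
  set m : ℕ → ℝ → ℝ := fun k t => t ^ (2 * k) * exp (-b * t ^ 2)
  have hm (k : ℕ) : IntegrableOn (m k) (Ioi 0) :=
    (integrable_pow_mul_exp_neg_mul_sq hb (2 * k)).integrableOn
  have hsplit : (fun t => invSqrtTaylor (t ^ 2) * exp (-b * t ^ 2)) =
      fun t => m 0 t - 1 / 2 * m 1 t + 3 / 8 * m 2 t := by
    funext t
    simp only [m, invSqrtTaylor]
    ring
  have hm01 : IntegrableOn (fun t => m 0 t - 1 / 2 * m 1 t) (Ioi 0) :=
    (hm 0).sub ((hm 1).const_mul _)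
  have hm2 : IntegrableOn (fun t => 3 / 8 * m 2 t) (Ioi 0) := (hm 2).const_mul _
  rw [hsplit]
  refine ⟨hm01.add hm2, ?_⟩
  rw [integral_add hm01 hm2, integral_sub (hm 0) ((hm 1).const_mul _), integral_const_mul,
    integral_const_mul]
  simp only [m, integral_pow_two_mul_mul_exp_neg_mul_sq_Ioi hb]
  have hΓ3 : Gamma (3 / 2) = √π / 2 := by
    rw [show (3 : ℝ) / 2 = 1 / 2 + 1 by norm_num, Gamma_add_one (by norm_num), Gamma_one_half_eq]
    ring
  have hΓ5 : Gamma (5 / 2) = 3 * √π / 4 := by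
    rw [show (5 : ℝ) / 2 = 3 / 2 + 1 by norm_num, Gamma_add_one (by norm_num), hΓ3]
    ring
  norm_num [hΓ3, hΓ5, Gamma_one_half_eq]
  field_simp
  ring

/-- upper bound `K₀(β) ≤ e^{−β} (√(2π)/(2√β)) (1 − 1/(8β) + 9/(128β²))`. -/
theorem bessel_K0_upper_bound (β : ℝ) (hβ : 0 < β) :
    Kb 0 β ≤ Real.exp (-β) * (Real.sqrt (2 * Real.pi) / (2 * Real.sqrt β)) *
      (1 - 1 / (8 * β) + 9 / (128 * β ^ 2)) := by
  obtain ⟨hint, hval⟩ :=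
    integrableOn_and_integral_invSqrtTaylor_sq_mul_exp_neg_mul_sq_Ioi (by positivity : 0 < 2 * β)
  have hK : Kb 0 β = ∫ t in Ioi 0, (2 / √(1 + t ^ 2)) • exp (-β * (1 + 2 * t ^ 2)) := by
    simpa [Kb] using integral_comp_cosh_Ioi fun c => exp (-β * c)
  have hpt (t : ℝ) : (2 / √(1 + t ^ 2)) • exp (-β * (1 + 2 * t ^ 2)) ≤
      2 * exp (-β) * (invSqrtTaylor (t ^ 2) * exp (-(2 * β) * t ^ 2)) := by
    calc (2 / √(1 + t ^ 2)) • exp (-β * (1 + 2 * t ^ 2))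
        = 2 * exp (-β) * ((√(1 + t ^ 2))⁻¹ * exp (-(2 * β) * t ^ 2)) := by
          rw [smul_eq_mul, show -β * (1 + 2 * t ^ 2) = -β + -(2 * β) * t ^ 2 by ring, exp_add]
          ring
      _ ≤ _ := by gcongr; exact inv_sqrt_one_add_le_invSqrtTaylor (sq_nonneg t)
  calc Kb 0 β
      ≤ ∫ t in Ioi 0, 2 * exp (-β) * (invSqrtTaylor (t ^ 2) * exp (-(2 * β) * t ^ 2)) := by
        rw [hK]
        exact integral_mono_of_nonneg (ae_of_all _ fun t => by positivity) (hint.const_mul _)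
          (ae_of_all _ hpt)
    _ = _ := by
      rw [integral_const_mul, hval, sqrt_mul zero_le_two, sqrt_mul zero_le_two]
      field_simp
      rw [sq_sqrt zero_le_two]
      ring
end

section
/- For every β with 0 < β < 2 one has (K₁/K₂)'(β) ≥ (2 − β)/(β + 2)² > 0, where (K₁/K₂)' denotes the derivative of the function β ↦ K₁(β)/K₂(β). -/
open MeasureTheory Real
open scoped InnerProductSpace

/-!
Differentiating under the integral sign gives `K_j' = -(K_{j+1} + K_{j-1}) / 2`, and integrating
`(sinh (j r) exp (-β cosh r))'` over `(0, ∞)` gives `β K_{j+1} = β K_{j-1} + 2 j K_j`. Together they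
show that `u = K₁ / K₂` solves the Riccati equation `u' = u² + 3u/β - 1`. Since `K₀ ≤ K₁`, the
recurrence for `j = 1` gives `u ≥ β / (β + 2)`, and the right-hand side of the Riccati equation is
increasing in `u > 0`, so `u' ≥ (β / (β + 2))² + 3 / (β + 2) - 1 = (2 - β) / (β + 2)²`.
-/

open Filter Set Asymptotics Topology

namespace Real

lemma abs_sinh_le_cosh (x : ℝ) : |sinh x| ≤ cosh x :=
  abs_le.2 ⟨by linarith [cosh_add_sinh x, exp_pos x], by linarith [cosh_sub_sinh x, exp_pos (-x)]⟩

lemma cosh_le_exp_abs (x : ℝ) : cosh x ≤ exp |x| := by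
  rw [← cosh_abs, cosh_eq]
  linarith [exp_le_exp.2 (neg_le_self (abs_nonneg x))]

lemma cosh_mul_le_exp_abs_mul {r : ℝ} (hr : 0 ≤ r) (a : ℝ) : cosh (a * r) ≤ exp (|a| * r) := by
  simpa [abs_mul, abs_of_nonneg hr] using cosh_le_exp_abs (a * r)

lemma cosh_mul_mul_exp_le {r : ℝ} (hr : 0 ≤ r) (a β : ℝ) :
    cosh (a * r) * exp (-β * cosh r) ≤ exp (|a| * r - β * cosh r) := by
  rw [sub_eq_add_neg, exp_add, neg_mul]
  gcongr
  exact cosh_mul_le_exp_abs_mul hr a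

end Real

lemma tendsto_mul_sub_mul_cosh_atBot (c : ℝ) {β : ℝ} (hβ : 0 < β) :
    Tendsto (fun r => c * r - β * cosh r) atTop atBot := by
  have hquad : Tendsto (fun r => r * (c + -(β / 4) * r)) atTop atBot :=
    tendsto_id.atTop_mul_atBot₀ <| tendsto_atBot_add_const_left _ c <|
      tendsto_id.const_mul_atTop_of_neg (by linarith)
  refine tendsto_atBot_mono' _ ?_ hquad
  filter_upwards [eventually_ge_atTop 0] with r hr
  have hexp : exp r / 2 ≤ cosh r := by rw [cosh_eq]; linarith [exp_pos (-r)]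
  nlinarith [quadratic_le_exp_of_nonneg hr]

lemma tendsto_exp_mul_sub_mul_cosh (c : ℝ) {β : ℝ} (hβ : 0 < β) :
    Tendsto (fun r => exp (c * r - β * cosh r)) atTop (𝓝 0) :=
  tendsto_exp_atBot.comp (tendsto_mul_sub_mul_cosh_atBot c hβ)

lemma integrableOn_exp_mul_sub_mul_cosh (c : ℝ) {β : ℝ} (hβ : 0 < β) :
    IntegrableOn (fun r => exp (c * r - β * cosh r)) (Ioi 0) := by
  refine integrable_of_isBigO_exp_neg one_pos (by fun_prop) <|
    isBigO_of_div_tendsto_nhds (.of_forall fun r h => absurd h (exp_ne_zero _)) 0 ?_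
  refine (tendsto_exp_mul_sub_mul_cosh (c + 1) hβ).congr fun r => ?_
  rw [Pi.div_apply, ← exp_sub]
  ring_nf

lemma integrableOn_Ioi_of_norm_le_exp_mul_sub_mul_cosh {f : ℝ → ℝ} (hf : Continuous f)
    (c : ℝ) {β : ℝ} (hβ : 0 < β) (hle : ∀ r, 0 < r → ‖f r‖ ≤ exp (c * r - β * cosh r)) :
    IntegrableOn f (Ioi 0) :=
  (integrableOn_exp_mul_sub_mul_cosh c hβ).mono' hf.aestronglyMeasurable
    (ae_restrict_of_forall_mem measurableSet_Ioi hle)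

lemma integrableOn_cosh_mul_mul_exp (a : ℝ) {β : ℝ} (hβ : 0 < β) :
    IntegrableOn (fun r => cosh (a * r) * exp (-β * cosh r)) (Ioi 0) := by
  refine integrableOn_Ioi_of_norm_le_exp_mul_sub_mul_cosh (by fun_prop) |a| hβ fun r hr => ?_
  rw [norm_of_nonneg (by positivity)]
  exact cosh_mul_mul_exp_le hr.le a β

lemma integrableOn_cosh_mul_mul_cosh_mul_exp (a : ℝ) {β : ℝ} (hβ : 0 < β) :
    IntegrableOn (fun r => cosh (a * r) * cosh r * exp (-β * cosh r)) (Ioi 0) := by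
  refine integrableOn_Ioi_of_norm_le_exp_mul_sub_mul_cosh (by fun_prop) (|a| + 1) hβ
    fun r hr => ?_
  rw [norm_of_nonneg (by positivity), add_mul, one_mul, add_sub_right_comm, exp_add,
    mul_right_comm]
  gcongr
  · exact cosh_mul_mul_exp_le hr.le a β
  · simpa [abs_of_pos hr] using cosh_le_exp_abs r

lemma tendsto_sinh_mul_mul_exp (a : ℝ) {β : ℝ} (hβ : 0 < β) :
    Tendsto (fun r => sinh (a * r) * exp (-β * cosh r)) atTop (𝓝 0) := by
  refine squeeze_zero_norm' ?_ (tendsto_exp_mul_sub_mul_cosh |a| hβ)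
  filter_upwards [eventually_ge_atTop 0] with r hr
  rw [norm_mul, norm_of_nonneg (exp_pos _).le, Real.norm_eq_abs]
  exact (mul_le_mul_of_nonneg_right (abs_sinh_le_cosh _) (exp_pos _).le).trans
    (cosh_mul_mul_exp_le hr a β)

lemma hasDerivAt_integral_cosh_mul_mul_exp (a : ℝ) {β : ℝ} (hβ : 0 < β) :
    HasDerivAt (fun x => ∫ r in Ioi (0 : ℝ), cosh (a * r) * exp (-x * cosh r))
      (-∫ r in Ioi (0 : ℝ), cosh (a * r) * cosh r * exp (-β * cosh r)) β := by
  rw [← integral_neg]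
  refine (hasDerivAt_integral_of_dominated_loc_of_deriv_le
    (μ := volume.restrict (Ioi 0)) (F := fun x r => cosh (a * r) * exp (-x * cosh r))
    (F' := fun x r => -(cosh (a * r) * cosh r * exp (-x * cosh r)))
    (bound := fun r => cosh (a * r) * cosh r * exp (-(β / 2) * cosh r))
    (Metric.ball_mem_nhds β (half_pos hβ))
    (.of_forall fun x => (by fun_prop : Continuous _).aestronglyMeasurable)
    (integrableOn_cosh_mul_mul_exp a hβ) (by fun_prop : Continuous _).aestronglyMeasurable
    (.of_forall fun r x hx => ?_) (integrableOn_cosh_mul_mul_cosh_mul_exp a (half_pos hβ))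
    (.of_forall fun r x _ => ?_)).2
  · have hx : β / 2 ≤ x := by
      rw [Metric.mem_ball, Real.dist_eq, abs_lt] at hx
      linarith
    rw [norm_neg, norm_of_nonneg (by positivity)]
    gcongr
  · exact (((hasDerivAt_neg x).mul_const (cosh r)).exp.const_mul (cosh (a * r))).congr_deriv
      (by ring)

lemma Kb_pos (j : ℕ) {β : ℝ} (hβ : 0 < β) : 0 < Kb j β := by
  refine setIntegral_pos_iff_support_of_nonneg_ae (.of_forall fun r => by positivity)
    (integrableOn_cosh_mul_mul_exp j hβ) |>.2 ?_
  have hsupp : Function.support (fun r => cosh (j * r) * exp (-β * cosh r)) = univ :=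
    Function.support_eq_univ fun r => by positivity
  rw [hsupp, univ_inter]
  simp

lemma Kb_mono {β : ℝ} (hβ : 0 < β) : Monotone (Kb · β) := fun i j hij => by
  refine setIntegral_mono_on (integrableOn_cosh_mul_mul_exp i hβ)
    (integrableOn_cosh_mul_mul_exp j hβ) measurableSet_Ioi fun r (hr : 0 < r) => ?_
  gcongr
  rw [cosh_le_cosh, abs_of_nonneg (by positivity), abs_of_nonneg (by positivity)]
  gcongr

lemma hasDerivAt_Kb_succ (j : ℕ) {β : ℝ} (hβ : 0 < β) :
    HasDerivAt (Kb (j + 1)) (-(Kb (j + 2) β + Kb j β) / 2) β := by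
  convert hasDerivAt_integral_cosh_mul_mul_exp ((j + 1 : ℕ) : ℝ) hβ using 1
  · rfl
  rw [Kb, Kb, ← integral_add (integrableOn_cosh_mul_mul_exp (j + 2 : ℕ) hβ)
    (integrableOn_cosh_mul_mul_exp j hβ), ← integral_neg, ← integral_div,
    ← integral_neg]
  refine setIntegral_congr_fun measurableSet_Ioi fun r _ => ?_
  have hadd := cosh_add ((j + 1) * r) r
  have hsub := cosh_sub ((j + 1) * r) r
  rw [show (j + 1) * r + r = (j + 2) * r by ring] at hadd
  rw [show (j + 1) * r - r = j * r by ring] at hsub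
  push_cast
  linear_combination -(exp (-β * cosh r) / 2) * (hadd + hsub)

lemma Kb_add_two (j : ℕ) {β : ℝ} (hβ : 0 < β) :
    β * Kb (j + 2) β = β * Kb j β + 2 * (j + 1) * Kb (j + 1) β := by
  let k : ℕ → ℝ → ℝ := fun n r => cosh (n * r) * exp (-β * cosh r)
  have hk (n : ℕ) : IntegrableOn (k n) (Ioi 0) := integrableOn_cosh_mul_mul_exp n hβ
  have hKb (n : ℕ) : ∫ r in Ioi 0, k n r = Kb n β := rfl
  have hderiv : ∀ r ∈ Ici (0 : ℝ),
      HasDerivAt (fun r => sinh ((j + 1 : ℕ) * r) * exp (-β * cosh r))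
        ((j + 1) * k (j + 1) r - β / 2 * (k (j + 2) r - k j r)) r := by
    intro r _
    refine ((((hasDerivAt_id r).const_mul ((j + 1 : ℕ) : ℝ)).sinh).mul
      ((hasDerivAt_cosh r).const_mul (-β)).exp).congr_deriv ?_
    have hadd := cosh_add ((j + 1) * r) r
    have hsub := cosh_sub ((j + 1) * r) r
    rw [show (j + 1) * r + r = (j + 2) * r by ring] at hadd
    rw [show (j + 1) * r - r = j * r by ring] at hsub
    simp only [k, id, Nat.cast_add, Nat.cast_one, Nat.cast_ofNat]
    linear_combination (β / 2 * exp (-β * cosh r)) * (hadd - hsub)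
  have hdiff : IntegrableOn (fun r => k (j + 2) r - k j r) (Ioi 0) := (hk _).sub (hk _)
  have h := integral_Ioi_of_hasDerivAt_of_tendsto' hderiv
    (((hk _).const_mul _).sub (hdiff.const_mul _)) (tendsto_sinh_mul_mul_exp _ hβ)
  rw [integral_sub ((hk _).const_mul _) (hdiff.const_mul _), integral_const_mul,
    integral_const_mul, integral_sub (hk _) (hk _), hKb, hKb, hKb] at h
  simp only [mul_zero, sinh_zero, zero_mul, sub_zero] at h
  linear_combination -2 * h

lemma hasDerivAt_Kb_one_div_Kb_two {β : ℝ} (hβ : 0 < β) :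
    HasDerivAt (fun β => Kb 1 β / Kb 2 β)
      ((Kb 1 β / Kb 2 β) ^ 2 + 3 / β * (Kb 1 β / Kb 2 β) - 1) β := by
  have hK2 := (Kb_pos 2 hβ).ne'
  refine ((hasDerivAt_Kb_succ 0 hβ).div (hasDerivAt_Kb_succ 1 hβ) hK2).congr_deriv ?_
  have h0 := Kb_add_two 0 hβ
  have h1 := Kb_add_two 1 hβ
  norm_num at h0 h1 ⊢
  field_simp
  linear_combination Kb 2 β * h0 + Kb 1 β * h1

lemma div_add_two_le_Kb_one_div_Kb_two {β : ℝ} (hβ : 0 < β) : β / (β + 2) ≤ Kb 1 β / Kb 2 β := by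
  rw [div_le_div_iff₀ (by positivity) (Kb_pos 2 hβ)]
  have h0 := Kb_add_two 0 hβ
  have h01 : Kb 0 β ≤ Kb 1 β := Kb_mono hβ zero_le_one
  norm_num at h0
  nlinarith

/-- for `0 < β < 2`, `(K₁/K₂)'(β) ≥ (2 − β)/(β + 2)² > 0`. -/
theorem deriv_K1_div_K2_lower_bound (β : ℝ) (hβ0 : 0 < β) (hβ2 : β < 2) :
    (2 - β) / (β + 2) ^ 2 ≤ deriv (fun β => Kb 1 β / Kb 2 β) β ∧
      0 < (2 - β) / (β + 2) ^ 2 := by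
  refine ⟨?_, div_pos (by linarith) (by positivity)⟩
  have hu := div_add_two_le_Kb_one_div_Kb_two hβ0
  rw [(hasDerivAt_Kb_one_div_Kb_two hβ0).deriv]
  calc (2 - β) / (β + 2) ^ 2 = (β / (β + 2)) ^ 2 + 3 / β * (β / (β + 2)) - 1 := by
        field_simp
        ring
    _ ≤ _ := by gcongr
end
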